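/- arXiv:1404.6633 — 2 statements merged into one kernel-verified Lean document; each statement's English description precedes it below -/
import Mathlib

section
/- Let F^y be the standard Marčenko–Pastur distribution with index y ∈ (0,1), with density (2πxy)⁻¹√((b−x)(x−a)) on [a,b] where a=(1−√y)², b=(1+√y)². Then ∫ log x dF^y(x) = −1 + ((y−1)/y)·log(1−y). -/
/-!
With `s = √y`, the substitution `x = 1 + s² - 2 s cos θ = |1 - s e^{iθ}|²` maps `[0, π]` onto
`[a, b]` and turns the integral into `(2/π) ∫₀^π sin²θ log φ / φ`, which by the symmetry
`θ ↦ 2π - θ` is half the integral over a full period. Since `log φ = 2 Re log (1 - s e^{iθ})`,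
that integral is the real part of a contour integral over the unit circle of
`(i/4) f(z) / (z² (z - s))` with `f(z) = (z² - 1)² log (1 - s z) / (1 - s z)` holomorphic on the
closed disc; partial fractions and Cauchy's formulas for `f` and `f'` give
`2πi ((f s - f 0) / s² - f'(0) / s)`, where `f 0 = 0`, `f'(0) = -s`, `f s = (1 - s²) log (1 - s²)`.
-/

open Real MeasureTheory Set Metric

theorem Complex.one_sub_mem_slitPlane {w : ℂ} (hw : ‖w‖ < 1) : 1 - w ∈ Complex.slitPlane := by
  simpa [sub_eq_add_neg] using Complex.mem_slitPlane_of_norm_lt_one (z := -w) (by simpa using hw)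

theorem Complex.log_normSq_eq_two_mul_re_log (w : ℂ) :
    Real.log (Complex.normSq w) = 2 * (Complex.log w).re := by
  rw [Complex.log_re, Complex.normSq_eq_norm_sq, Real.log_pow]; norm_num

theorem Complex.normSq_one_sub_ofReal_mul_exp (s θ : ℝ) :
    Complex.normSq (1 - s * Complex.exp (θ * Complex.I)) = 1 + s ^ 2 - 2 * s * Real.cos θ := by
  rw [Complex.normSq_apply]
  simp only [sub_re, sub_im, one_re, one_im, re_ofReal_mul, im_ofReal_mul, exp_ofReal_mul_I_re,
    exp_ofReal_mul_I_im]
  linear_combination s ^ 2 * Real.sin_sq_add_cos_sq θ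

theorem intervalIntegral.integral_zero_two_mul_of_symm {E : Type*} [NormedAddCommGroup E]
    [NormedSpace ℝ E] {f : ℝ → E} {c : ℝ} (hf : IntervalIntegrable f volume 0 c)
    (hsymm : ∀ x, f (2 * c - x) = f x) :
    ∫ x in 0..2 * c, f x = 2 • ∫ x in 0..c, f x := by
  have hreflect : ∫ x in c..2 * c, f x = ∫ x in 0..c, f x := by
    have h := intervalIntegral.integral_comp_sub_left f (2 * c) (a := 0) (b := c)
    simp only [hsymm, sub_zero, show 2 * c - c = c by ring] at h
    exact h.symm
  have hf' : IntervalIntegrable f volume c (2 * c) := by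
    have h := (hf.comp_sub_left (2 * c)).symm
    simp only [hsymm, sub_zero, show 2 * c - c = c by ring] at h
    exact h
  rw [← intervalIntegral.integral_add_adjacent_intervals hf hf', hreflect, two_nsmul]

theorem one_add_sq_sub_two_mul_cos_pos {s : ℝ} (hs : |s| ≠ 1) (θ : ℝ) :
    0 < 1 + s ^ 2 - 2 * s * cos θ := by
  have hgap : 0 < (1 - |s|) ^ 2 := by positivity [sub_ne_zero.2 hs.symm]
  have hcos : s * cos θ ≤ |s| :=
    calc s * cos θ ≤ |s| * |cos θ| := (le_abs_self _).trans (abs_mul _ _).le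
      _ ≤ |s| := mul_le_of_le_one_right (abs_nonneg _) (abs_cos_le_one θ)
  nlinarith [sq_abs s]

theorem integral_log_mul_marchenkoPastur_density_eq_integral_sin_sq {s : ℝ} (hs0 : 0 < s)
    (hs1 : s ≠ 1) :
    ∫ x in (1 - s) ^ 2..(1 + s) ^ 2,
        log x * (√(((1 + s) ^ 2 - x) * (x - (1 - s) ^ 2)) / (2 * π * x * s ^ 2)) =
      2 / π * ∫ θ in 0..π,
        sin θ ^ 2 / (1 + s ^ 2 - 2 * s * cos θ) * log (1 + s ^ 2 - 2 * s * cos θ) := by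
  set φ : ℝ → ℝ := fun θ => 1 + s ^ 2 - 2 * s * cos θ with hφ_def
  have hφ_pos : ∀ θ, 0 < φ θ := one_add_sq_sub_two_mul_cos_pos (by rwa [abs_of_pos hs0])
  have hφ_deriv : ∀ θ ∈ uIcc 0 π, HasDerivAt φ (2 * s * sin θ) θ := fun θ _ => by
    simpa using ((hasDerivAt_cos θ).const_mul (2 * s)).const_sub (1 + s ^ 2)
  have hcont : ContinuousOn
      (fun x => log x * (√(((1 + s) ^ 2 - x) * (x - (1 - s) ^ 2)) / (2 * π * x * s ^ 2)))
      (φ '' uIcc 0 π) := by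
    rintro _ ⟨θ, -, rfl⟩
    have := (hφ_pos θ).ne'
    fun_prop (disch := positivity)
  have hsubst := intervalIntegral.integral_comp_mul_deriv' hφ_deriv (by fun_prop) hcont
  have hφ0 : φ 0 = (1 - s) ^ 2 := by simp only [hφ_def, cos_zero]; ring
  have hφπ : φ π = (1 + s) ^ 2 := by simp only [hφ_def, cos_pi]; ring
  rw [hφ0, hφπ] at hsubst
  rw [← hsubst, ← intervalIntegral.integral_const_mul]
  refine intervalIntegral.integral_congr fun θ hθ => ?_
  rw [uIcc_of_le pi_pos.le] at hθ
  have hsin : 0 ≤ sin θ := sin_nonneg_of_nonneg_of_le_pi hθ.1 hθ.2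
  have hsqrt : √(((1 + s) ^ 2 - φ θ) * (φ θ - (1 - s) ^ 2)) = 2 * s * sin θ := by
    rw [← sqrt_sq (by positivity : 0 ≤ 2 * s * sin θ)]
    congr 1
    simp only [hφ_def]
    linear_combination (-4 * s ^ 2) * sin_sq_add_cos_sq θ
  rw [Function.comp_apply, hsqrt, show 1 + s ^ 2 - 2 * s * cos θ = φ θ from rfl]
  field_simp [(hφ_pos θ).ne', pi_pos.ne']

theorem integral_sin_sq_div_mul_eq_circleIntegral {s : ℝ} (hs : |s| ≠ 1) (g : ℂ → ℂ) :
    ∫ θ in 0..2 * π, ((sin θ ^ 2 / (1 + s ^ 2 - 2 * s * cos θ) : ℝ) : ℂ) *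
        g (Complex.exp (θ * Complex.I)) =
      Complex.I / 4 * ∮ z in C(0, 1), (z ^ 2 - 1) ^ 2 * g z / (1 - s * z) / (z ^ 2 * (z - s)) := by
  rw [circleIntegral, ← intervalIntegral.integral_const_mul]
  refine intervalIntegral.integral_congr fun θ _ => ?_
  have hcircle : circleMap 0 1 θ = Complex.exp (θ * Complex.I) := by simp [circleMap]
  simp only [deriv_circleMap, hcircle, smul_eq_mul]
  set z := Complex.exp (θ * Complex.I) with hz_def
  have hz_norm : ‖z‖ = 1 := Complex.norm_exp_ofReal_mul_I θ
  have hz0 : z ≠ 0 := Complex.exp_ne_zero _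
  have hzs : z - s ≠ 0 := fun h => hs <| by
    rw [sub_eq_zero.1 h, Complex.norm_real, Real.norm_eq_abs] at hz_norm; exact hz_norm
  have hsz : 1 - s * z ≠ 0 := fun h => hs <| by
    have := congrArg norm (sub_eq_zero.1 h).symm
    rwa [norm_mul, hz_norm, mul_one, Complex.norm_real, Real.norm_eq_abs, norm_one] at this
  have hz_inv : Complex.exp (-(θ * Complex.I)) = z⁻¹ := by rw [Complex.exp_neg]
  have hcos : Complex.cos θ = (z + z⁻¹) / 2 := by rw [Complex.cos, neg_mul, hz_inv]
  have hsin : Complex.sin θ = (z⁻¹ - z) * Complex.I / 2 := by rw [Complex.sin, neg_mul, hz_inv]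
  have hdenom : 1 + (s : ℂ) ^ 2 - 2 * s * ((z + z⁻¹) / 2) = (1 - s * z) * (z - s) / z := by
    field_simp
    ring
  push_cast
  rw [hcos, hsin, hdenom]
  field_simp
  ring

theorem circleIntegral_div_sub_center_sq_mul_sub {R : ℝ} {c w : ℂ} {f : ℂ → ℂ}
    (hf : DifferentiableOn ℂ f (closedBall c R)) (hw : w ∈ ball c R) (hwc : w ≠ c) :
    ∮ z in C(c, R), f z / ((z - c) ^ 2 * (z - w)) =
      2 * π * Complex.I * ((f w - f c) / (w - c) ^ 2 - deriv f c / (w - c)) := by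
  have hR : 0 < R := pos_of_mem_ball hw
  have hc : c ∈ ball c R := mem_ball_self hR
  have hne : ∀ {u}, u ∈ ball c R → ∀ z ∈ sphere c R, z - u ≠ 0 := fun hu z hz =>
    sub_ne_zero.2 (sphere_disjoint_ball.ne_of_mem hz hu)
  have hfc : ContinuousOn f (sphere c R) := hf.continuousOn.mono sphere_subset_closedBall
  have hint : ∀ (a : ℂ) (n : ℕ) {u}, u ∈ ball c R →
      CircleIntegrable (fun z => a • (1 / (z - u) ^ n) • f z) c R := fun a n u hu =>
    have hinv : ContinuousOn (fun z => 1 / (z - u) ^ n) (sphere c R) :=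
      continuousOn_const.div (by fun_prop) fun z hz => pow_ne_zero _ (hne hu z hz)
    ContinuousOn.circleIntegrable hR.le (by fun_prop)
  have hpartial : EqOn (fun z => f z / ((z - c) ^ 2 * (z - w)))
      (fun z => ((w - c) ^ 2)⁻¹ • ((1 / (z - w) ^ 1) • f z)
        - ((w - c) ^ 2)⁻¹ • ((1 / (z - c) ^ 1) • f z)
        - (w - c)⁻¹ • ((1 / (z - c) ^ 2) • f z)) (sphere c R) := fun z hz => by
    have hzw := hne hw z hz
    have hzc := hne hc z hz
    have hwc' := sub_ne_zero.2 hwc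
    simp only [smul_eq_mul]
    field_simp
    ring
  rw [circleIntegral.integral_congr hR.le hpartial,
    circleIntegral.integral_sub ((hint _ 1 hw).fun_sub (hint _ 1 hc)) (hint _ 2 hc),
    circleIntegral.integral_sub (hint _ 1 hw) (hint _ 1 hc)]
  simp only [circleIntegral.integral_smul]
  rw [hf.deriv_eq_smul_circleIntegral hR]
  simp only [pow_one, one_div]
  rw [hf.circleIntegral_sub_inv_smul hw, hf.circleIntegral_sub_inv_smul hc]
  simp only [smul_eq_mul]
  field_simp

theorem hasDerivAt_log_one_sub_mul_div {s z : ℂ} (hz : ‖s * z‖ < 1) :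
    HasDerivAt (fun z => Complex.log (1 - s * z) / (1 - s * z))
      (-s * (1 - Complex.log (1 - s * z)) / (1 - s * z) ^ 2) z := by
  have hslit := Complex.one_sub_mem_slitPlane hz
  have hlin : HasDerivAt (fun z => 1 - s * z) (-s) z := by
    simpa using ((hasDerivAt_id z).const_mul s).const_sub 1
  refine ((hlin.clog hslit).fun_div hlin (Complex.slitPlane_ne_zero hslit)).congr_deriv ?_
  rw [div_mul_cancel₀ _ (Complex.slitPlane_ne_zero hslit)]
  ring

theorem circleIntegral_log_one_sub_mul {s : ℂ} (hs0 : s ≠ 0) (hs1 : ‖s‖ < 1) :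
    ∮ z in C(0, 1), (z ^ 2 - 1) ^ 2 * Complex.log (1 - s * z) / (1 - s * z) / (z ^ 2 * (z - s)) =
      2 * π * Complex.I * (1 + (1 - s ^ 2) * Complex.log (1 - s ^ 2) / s ^ 2) := by
  set f : ℂ → ℂ := fun z => (z ^ 2 - 1) ^ 2 * (Complex.log (1 - s * z) / (1 - s * z))
  have hsz : ∀ z ∈ closedBall (0 : ℂ) 1, ‖s * z‖ < 1 := fun z hz => by
    rw [norm_mul]
    exact mul_lt_one_of_nonneg_of_lt_one_left (norm_nonneg _) hs1 (by simpa using hz)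
  have hf : DifferentiableOn ℂ f (closedBall 0 1) := fun z hz =>
    ((by fun_prop : Differentiable ℂ fun z : ℂ => (z ^ 2 - 1) ^ 2) z |>.mul
      (hasDerivAt_log_one_sub_mul_div (hsz z hz)).differentiableAt).differentiableWithinAt
  have hf' : deriv f 0 = -s := by
    have hp : HasDerivAt (fun z : ℂ => (z ^ 2 - 1) ^ 2) 0 0 := by
      simpa using ((hasDerivAt_pow 2 (0 : ℂ)).sub_const 1).fun_pow 2
    have := hp.fun_mul (hasDerivAt_log_one_sub_mul_div (s := s) (z := 0) (by simp))
    simpa using this.deriv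
  have hs : s ∈ ball (0 : ℂ) 1 := by simpa using hs1
  have key := circleIntegral_div_sub_center_sq_mul_sub hf hs hs0
  simp only [sub_zero] at key
  convert key using 2
  · funext z; simp only [f]; ring
  · simp only [f, hf', mul_zero, sub_zero, zero_pow two_ne_zero, Complex.log_one, zero_div]
    have hs2 : 1 - s * s ≠ 0 := Complex.slitPlane_ne_zero
      (Complex.one_sub_mem_slitPlane (hsz s (ball_subset_closedBall hs)))
    rw [← sq] at hs2 ⊢
    field_simp
    ring

theorem integral_zero_two_pi_sin_sq_div_mul_log {s : ℝ} (hs0 : s ≠ 0) (hs1 : |s| < 1) :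
    ∫ θ in 0..2 * π,
        sin θ ^ 2 / (1 + s ^ 2 - 2 * s * cos θ) * log (1 + s ^ 2 - 2 * s * cos θ) =
      -π * (1 + (1 - s ^ 2) * log (1 - s ^ 2) / s ^ 2) := by
  set g : ℝ → ℂ := fun θ => ((sin θ ^ 2 / (1 + s ^ 2 - 2 * s * cos θ) : ℝ) : ℂ) *
    Complex.log (1 - s * Complex.exp (θ * Complex.I))
  have hnorm : ∀ θ : ℝ, ‖(s : ℂ) * Complex.exp (θ * Complex.I)‖ < 1 := fun θ => by
    rwa [norm_mul, Complex.norm_exp_ofReal_mul_I, mul_one, Complex.norm_real, Real.norm_eq_abs]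
  have hg : Continuous g := by
    have hφ : ∀ θ, 1 + s ^ 2 - 2 * s * cos θ ≠ 0 := fun θ =>
      (one_add_sq_sub_two_mul_cos_pos hs1.ne θ).ne'
    have hlog : Continuous fun θ : ℝ => Complex.log (1 - s * Complex.exp (θ * Complex.I)) :=
      (by fun_prop : Continuous fun θ : ℝ => 1 - s * Complex.exp (θ * Complex.I)).clog
        fun θ => Complex.one_sub_mem_slitPlane (hnorm θ)
    exact (Complex.continuous_ofReal.comp (by fun_prop (disch := exact hφ _))).mul hlog
  have hre : ∀ θ, sin θ ^ 2 / (1 + s ^ 2 - 2 * s * cos θ) * log (1 + s ^ 2 - 2 * s * cos θ) =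
      2 * (g θ).re := fun θ => by
    have h := Complex.log_normSq_eq_two_mul_re_log (1 - s * Complex.exp (θ * Complex.I))
    rw [Complex.normSq_one_sub_ofReal_mul_exp] at h
    simp only [g, Complex.re_ofReal_mul, h]
    ring
  have hcircle : ∫ θ in 0..2 * π, g θ =
      ((-π / 2 * (1 + (1 - s ^ 2) * log (1 - s ^ 2) / s ^ 2) : ℝ) : ℂ) := by
    have h1s : (0 : ℝ) ≤ 1 - s ^ 2 := by nlinarith [abs_lt.1 hs1]
    rw [integral_sin_sq_div_mul_eq_circleIntegral (ne_of_lt hs1)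
        (fun z => Complex.log (1 - s * z)),
      circleIntegral_log_one_sub_mul (Complex.ofReal_ne_zero.2 hs0)
        (by rwa [Complex.norm_real, Real.norm_eq_abs])]
    have hlog : Complex.log (1 - (s : ℂ) ^ 2) = (log (1 - s ^ 2) : ℝ) := by
      rw [Complex.ofReal_log h1s]; push_cast; rfl
    rw [hlog]
    push_cast
    linear_combination ((π : ℂ) / 2 * (1 + (1 - s ^ 2) * log (1 - s ^ 2) / s ^ 2)) * Complex.I_sq
  simp_rw [hre]
  rw [intervalIntegral.integral_const_mul,
    show ∫ θ in 0..2 * π, (g θ).re = (∫ θ in 0..2 * π, g θ).re from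
      intervalIntegral.intervalIntegral_re (hg.intervalIntegrable _ _),
    hcircle, Complex.ofReal_re]
  ring

theorem integral_zero_pi_sin_sq_div_mul_log {s : ℝ} (hs0 : s ≠ 0) (hs1 : |s| < 1) :
    ∫ θ in 0..π,
        sin θ ^ 2 / (1 + s ^ 2 - 2 * s * cos θ) * log (1 + s ^ 2 - 2 * s * cos θ) =
      -π / 2 * (1 + (1 - s ^ 2) * log (1 - s ^ 2) / s ^ 2) := by
  have hφ : ∀ θ, 1 + s ^ 2 - 2 * s * cos θ ≠ 0 := fun θ =>
    (one_add_sq_sub_two_mul_cos_pos hs1.ne θ).ne'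
  have hcont : Continuous fun θ =>
      sin θ ^ 2 / (1 + s ^ 2 - 2 * s * cos θ) * log (1 + s ^ 2 - 2 * s * cos θ) := by
    fun_prop (disch := exact hφ _)
  have hdouble := intervalIntegral.integral_zero_two_mul_of_symm (hcont.intervalIntegrable 0 π)
    fun θ => by simp only [cos_two_pi_sub, sin_two_pi_sub, neg_sq]
  rw [integral_zero_two_pi_sin_sq_div_mul_log hs0 hs1, two_nsmul] at hdouble
  linarith

theorem stmt2 (y : ℝ) (hy : y ∈ Set.Ioo (0 : ℝ) 1)
    (a b : ℝ) (ha : a = (1 - Real.sqrt y) ^ 2) (hb : b = (1 + Real.sqrt y) ^ 2) :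
    ∫ x in a..b, Real.log x * (Real.sqrt ((b - x) * (x - a)) / (2 * Real.pi * x * y)) =
      -1 + ((y - 1) / y) * Real.log (1 - y) := by
  obtain ⟨s, hs0, rfl⟩ : ∃ s, 0 < s ∧ y = s ^ 2 := ⟨√y, sqrt_pos.2 hy.1, (sq_sqrt hy.1.le).symm⟩
  have hs1 : s < 1 := by nlinarith [hy.2]
  subst ha hb
  rw [sqrt_sq hs0.le, integral_log_mul_marchenkoPastur_density_eq_integral_sin_sq hs0 hs1.ne,
    integral_zero_pi_sin_sq_div_mul_log hs0.ne' (by rwa [abs_of_pos hs0])]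
  field_simp
  ring
end

section
/- Let y ∈ (0,1) and h₀ = √y. For f(x) = x − log x − 1, the value I₂(f) = (2πi)⁻¹ ∮_{|ξ|=1} f(|1+h₀ξ|²)·ξ⁻³ dξ, where on |ξ|=1 one interprets |1+h₀ξ|² = (1+h₀ξ)(1+h₀/ξ), equals y/2. -/
/-!
On the unit circle, `(1 + hξ)(1 + h/ξ) = 1 + h² + hξ + h/ξ` and both factors lie in the right
half-plane, where the principal logarithm is additive; hence the integrand `f(|1 + hξ|²) / ξ³`,
`f x = x - log x - 1`, splits as `(B ξ + B ξ⁻¹) / ξ³` with `B ξ = h²/2 + hξ - log (1 + hξ)`.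
`B` is holomorphic on the closed unit disc, so Cauchy's formula gives `∮ B ξ / ξ³ = πi B''(0) = πi h²`,
while the substitution `ξ ↦ ξ⁻¹` turns `∮ B ξ⁻¹ / ξ³` into `∮ ξ B ξ = 0`.
-/

open Complex Real Metric

theorem circleMap_zero_one_two_pi_sub (θ : ℝ) :
    circleMap 0 1 (2 * π - θ) = (circleMap 0 1 θ)⁻¹ := by
  simp only [circleMap, zero_add, ofReal_one, one_mul, ofReal_sub, ofReal_mul, sub_mul,
    ofReal_ofNat, Complex.exp_sub, exp_two_pi_mul_I, one_div]

theorem circleIntegral_eq_inv_sq_smul_comp_inv {E : Type*} [NormedAddCommGroup E]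
    [NormedSpace ℂ E] (f : ℂ → E) :
    ∮ z in C(0, 1), f z = ∮ z in C(0, 1), (z ^ 2)⁻¹ • f z⁻¹ := by
  have hreflect := intervalIntegral.integral_comp_sub_left
    (fun θ ↦ deriv (circleMap 0 1) θ • f (circleMap 0 1 θ)) (a := 0) (b := 2 * π) (2 * π)
  simp only [sub_self, sub_zero] at hreflect
  rw [circleIntegral, circleIntegral, ← hreflect]
  refine intervalIntegral.integral_congr fun θ _ ↦ ?_
  have h0 : circleMap 0 1 θ ≠ 0 := circleMap_ne_center one_ne_zero
  simp only [deriv_circleMap, circleMap_zero_one_two_pi_sub, smul_smul]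
  congr 1
  field_simp

theorem circleIntegral_comp_inv_div_pow_eq_zero {A : ℂ → ℂ}
    (hA : DifferentiableOn ℂ A (closedBall 0 1)) (n : ℕ) :
    ∮ z in C(0, 1), A z⁻¹ / z ^ (n + 2) = 0 := by
  rw [circleIntegral_eq_inv_sq_smul_comp_inv (E := ℂ)]
  have hzero : ∮ z in C(0, 1), z ^ n * A z = 0 :=
    (((differentiableOn_pow n).mul hA).mono closure_ball_subset_closedBall).diffContOnCl
      |>.circleIntegral_eq_zero zero_le_one
  refine (circleIntegral.integral_congr zero_le_one fun z hz ↦ ?_).trans hzero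
  have hz0 : z ≠ 0 := ne_zero_of_mem_unit_sphere ⟨z, hz⟩
  rw [smul_eq_mul, inv_inv, inv_pow, pow_add]
  field_simp

theorem Complex.re_one_add_pos_of_norm_lt_one {w : ℂ} (hw : ‖w‖ < 1) : 0 < (1 + w).re := by
  have := neg_le_of_abs_le (abs_re_le_norm w)
  simp only [add_re, one_re]
  linarith

theorem Complex.log_mul_of_re_pos {a b : ℂ} (ha : 0 < a.re) (hb : 0 < b.re) :
    log (a * b) = log a + log b := by
  have hpa := abs_lt.mp (abs_arg_lt_pi_div_two_iff.mpr (Or.inl ha))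
  have hpb := abs_lt.mp (abs_arg_lt_pi_div_two_iff.mpr (Or.inl hb))
  refine log_mul (ne_zero_of_re_pos ha) (ne_zero_of_re_pos hb) ⟨?_, ?_⟩ <;> linarith

theorem hasDerivAt_one_add_mul (h z : ℂ) : HasDerivAt (fun w ↦ 1 + h * w) h z := by
  simpa using ((hasDerivAt_id z).const_mul h).const_add 1

noncomputable def halfSummand (h z : ℂ) : ℂ := h ^ 2 / 2 + h * z - log (1 + h * z)

theorem hasDerivAt_halfSummand (h : ℂ) {z : ℂ} (hz : 1 + h * z ∈ slitPlane) :
    HasDerivAt (halfSummand h) (h - h / (1 + h * z)) z := by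
  have := (((hasDerivAt_id z).const_mul h).const_add (h ^ 2 / 2)).sub
    ((hasDerivAt_one_add_mul h z).clog hz)
  rw [mul_one] at this
  exact this

theorem differentiableOn_halfSummand {h : ℂ} (hh : ‖h‖ < 1) :
    DifferentiableOn ℂ (halfSummand h) (closedBall 0 1) := fun z hz ↦ by
  have : ‖h * z‖ < 1 := by
    rw [norm_mul]
    exact mul_lt_one_of_nonneg_of_lt_one_left (norm_nonneg h) hh (mem_closedBall_zero_iff.mp hz)
  exact (hasDerivAt_halfSummand h (mem_slitPlane_of_norm_lt_one this)).differentiableAt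
    |>.differentiableWithinAt

theorem iteratedDeriv_two_halfSummand_zero (h : ℂ) :
    iteratedDeriv 2 (halfSummand h) 0 = h ^ 2 := by
  have hslit : ∀ᶠ z in nhds 0, 1 + h * z ∈ slitPlane :=
    (hasDerivAt_one_add_mul h 0).continuousAt.eventually_mem
      (isOpen_slitPlane.mem_nhds (by simp))
  have hderiv : deriv (halfSummand h) =ᶠ[nhds 0] fun z ↦ h - h / (1 + h * z) :=
    hslit.mono fun z hz ↦ (hasDerivAt_halfSummand h hz).deriv
  have hderiv2 := (((hasDerivAt_one_add_mul h 0).inv (by simp)).const_mul h).const_sub h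
  rw [iteratedDeriv_succ, iteratedDeriv_one, hderiv.deriv_eq]
  simpa [div_eq_mul_inv, sq] using hderiv2.deriv

theorem logRatio_eq_halfSummand_add_halfSummand_inv {h z : ℂ} (hh : ‖h‖ < 1) (hz : ‖z‖ = 1) :
    (1 + h * z) * (1 + h / z) - log ((1 + h * z) * (1 + h / z)) - 1
      = halfSummand h z + halfSummand h z⁻¹ := by
  have hz0 : z ≠ 0 := norm_ne_zero_iff.mp (by simp [hz])
  have h1 : ‖h * z‖ < 1 := by rwa [norm_mul, hz, mul_one]
  have h2 : ‖h / z‖ < 1 := by rwa [norm_div, hz, div_one]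
  rw [log_mul_of_re_pos (re_one_add_pos_of_norm_lt_one h1) (re_one_add_pos_of_norm_lt_one h2)]
  simp only [halfSummand, ← div_eq_mul_inv]
  field_simp
  ring

theorem circleIntegral_logRatio_div_pow_three {h : ℂ} (hh : ‖h‖ < 1) :
    ∮ ξ in C(0, 1), ((1 + h * ξ) * (1 + h / ξ) - log ((1 + h * ξ) * (1 + h / ξ)) - 1) / ξ ^ 3
      = π * I * h ^ 2 := by
  have hB := differentiableOn_halfSummand hh
  have hBc : ContinuousOn (halfSummand h) (sphere 0 1) :=
    hB.continuousOn.mono sphere_subset_closedBall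
  have hpow : ∀ z ∈ sphere (0 : ℂ) 1, z ^ 3 ≠ 0 := fun z hz ↦
    pow_ne_zero 3 (ne_zero_of_mem_unit_sphere ⟨z, hz⟩)
  have hint : CircleIntegrable (fun z ↦ halfSummand h z / z ^ 3) 0 1 :=
    (hBc.div (continuousOn_pow 3) hpow).circleIntegrable zero_le_one
  have hint_inv : CircleIntegrable (fun z ↦ halfSummand h z⁻¹ / z ^ 3) 0 1 := by
    refine ((hBc.comp ?_ fun z hz ↦ ?_).div (continuousOn_pow 3) hpow).circleIntegrable zero_le_one
    · exact continuousOn_inv₀.mono fun z hz ↦ ne_zero_of_mem_unit_sphere ⟨z, hz⟩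
    · simpa using hz
  have hcauchy := hB.circleIntegral_one_div_sub_center_pow_smul one_pos 2
  simp only [sub_zero, smul_eq_mul, one_div_mul_eq_div, iteratedDeriv_two_halfSummand_zero]
    at hcauchy
  calc _ = ∮ z in C(0, 1), (halfSummand h z / z ^ 3 + halfSummand h z⁻¹ / z ^ 3) := by
        refine circleIntegral.integral_congr zero_le_one fun z hz ↦ ?_
        rw [logRatio_eq_halfSummand_add_halfSummand_inv hh (mem_sphere_zero_iff_norm.mp hz),
          add_div]
    _ = π * I * h ^ 2 := by
        rw [circleIntegral.integral_add hint hint_inv, hcauchy,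
          circleIntegral_comp_inv_div_pow_eq_zero hB 1]
        simp only [Nat.factorial, add_zero]
        ring

theorem stmt18 (y : ℝ) (hy : y ∈ Set.Ioo (0 : ℝ) 1)
    (h₀ : ℂ) (hh₀ : h₀ = (Real.sqrt y : ℂ)) :
    (1 / (2 * (Real.pi : ℂ) * Complex.I)) *
        (∮ ξ in C(0, 1),
          ((1 + h₀ * ξ) * (1 + h₀ / ξ) - Complex.log ((1 + h₀ * ξ) * (1 + h₀ / ξ)) - 1) / ξ ^ 3)
      = (y : ℂ) / 2 := by
  have hnorm : ‖h₀‖ < 1 := by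
    rw [hh₀, norm_real, norm_of_nonneg (sqrt_nonneg y), sqrt_lt' one_pos, one_pow]
    exact hy.2
  have hsq : h₀ ^ 2 = y := by
    rw [hh₀, ← ofReal_pow, sq_sqrt hy.1.le]
  rw [circleIntegral_logRatio_div_pow_three hnorm, hsq]
  field_simp [pi_ne_zero, I_ne_zero]
end
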